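/- There exist a set K₁ = [0,1), sets K₂ = K₃ = [0,1], the inclusion map f : [0,1) → [0,1], and closed relations R (the diagonal {(x,x) : x ∈ [0,1)}) and S = {(1,1)} such that, defining the patched pushforward as the topological closure of the usual pushforward, the Frobenius law fails: cl(f₁(R ∩ f*S)) ≠ cl(f₁R) ∩ S. Specifically the left side is empty and the right side is {(1,1)}. -/

import Mathlib

open Set

/-- The inclusion of `[0,1)` into `[0,1]`. -/
def f8 : (Ico (0:ℝ) 1) → (Icc (0:ℝ) 1) :=
  fun x => ⟨x.1, ⟨x.2.1, le_of_lt x.2.2⟩⟩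

/-- The diagonal relation `{(x,x) : x ∈ [0,1)}`. -/
def R8 : Set ((Ico (0:ℝ) 1) × (Icc (0:ℝ) 1)) := {p | (p.2 : ℝ) = (p.1 : ℝ)}

/-- The boundary constraint `{(1,1)}`. -/
def S8 : Set ((Icc (0:ℝ) 1) × (Icc (0:ℝ) 1)) := {p | (p.1 : ℝ) = 1 ∧ (p.2 : ℝ) = 1}

/-- Pushforward of a relation along `f8`. -/
def push8 (T : Set ((Ico (0:ℝ) 1) × (Icc (0:ℝ) 1))) :
    Set ((Icc (0:ℝ) 1) × (Icc (0:ℝ) 1)) :=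
  {p | ∃ x, f8 x = p.1 ∧ (x, p.2) ∈ T}

/-- Pullback of a relation along `f8`. -/
def pull8 (T : Set ((Icc (0:ℝ) 1) × (Icc (0:ℝ) 1))) :
    Set ((Ico (0:ℝ) 1) × (Icc (0:ℝ) 1)) :=
  {p | (f8 p.1, p.2) ∈ T}

lemma u8_mem (n : ℕ) : (1 - 1/(n+1) : ℝ) ∈ Ico (0:ℝ) 1 := by
  constructor
  · have h1 : (1/(n+1) : ℝ) ≤ 1 := by
      rw [div_le_one (by positivity)]; linarith [Nat.cast_nonneg (α := ℝ) n]
    linarith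
  · have : (0:ℝ) < 1/(n+1) := by positivity
    linarith

lemma u8_tendsto : Filter.Tendsto (fun n : ℕ => (1 - 1/(n+1) : ℝ))
    Filter.atTop (nhds 1) := by
  have h := tendsto_one_div_add_atTop_nhds_zero_nat (𝕜 := ℝ)
  have := h.const_sub 1
  simpa using this

/-- The closure-patched pushforward breaks Frobenius reciprocity. -/
theorem stmt_8 :
    IsClosed R8 ∧ IsClosed S8 ∧
    closure (push8 (R8 ∩ pull8 S8)) = ∅ ∧
    closure (push8 R8) ∩ S8 =
      {((⟨1, ⟨zero_le_one, le_refl 1⟩⟩ : Icc (0:ℝ) 1),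
        (⟨1, ⟨zero_le_one, le_refl 1⟩⟩ : Icc (0:ℝ) 1))} ∧
    closure (push8 (R8 ∩ pull8 S8)) ≠ closure (push8 R8) ∩ S8 := by
  have hRclosed : IsClosed R8 :=
    isClosed_eq (by continuity) (by continuity)
  have hSclosed : IsClosed S8 := by
    have : S8 = {p : (Icc (0:ℝ) 1) × (Icc (0:ℝ) 1) | (p.1 : ℝ) = 1} ∩
        {p | (p.2 : ℝ) = 1} := rfl
    rw [this]
    exact (isClosed_eq (by continuity) continuous_const).inter
      (isClosed_eq (by continuity) continuous_const)
  have hempty : R8 ∩ pull8 S8 = ∅ := by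
    ext p
    simp only [R8, pull8, S8, f8, mem_inter_iff, mem_setOf_eq,
      mem_empty_iff_false, iff_false, not_and]
    intro _ h
    exact absurd h (ne_of_lt p.1.2.2)
  have hLHS : closure (push8 (R8 ∩ pull8 S8)) = ∅ := by
    rw [hempty]
    have : push8 ∅ = ∅ := by
      ext p; simp [push8]
    rw [this, closure_empty]
  have hone : ((⟨1, ⟨zero_le_one, le_refl 1⟩⟩ : Icc (0:ℝ) 1),
      (⟨1, ⟨zero_le_one, le_refl 1⟩⟩ : Icc (0:ℝ) 1)) ∈ closure (push8 R8) := by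
    refine mem_closure_of_tendsto (f := fun n : ℕ =>
      ((⟨1 - 1/(n+1), ⟨(u8_mem n).1, le_of_lt (u8_mem n).2⟩⟩ : Icc (0:ℝ) 1),
       (⟨1 - 1/(n+1), ⟨(u8_mem n).1, le_of_lt (u8_mem n).2⟩⟩ : Icc (0:ℝ) 1)))
      (b := Filter.atTop) ?_ ?_
    · apply Filter.Tendsto.prodMk_nhds <;>
      · rw [tendsto_subtype_rng]
        exact u8_tendsto
    · filter_upwards with n
      exact ⟨⟨1 - 1/(n+1), u8_mem n⟩, rfl, rfl⟩
  have hRHS : closure (push8 R8) ∩ S8 =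
      {((⟨1, ⟨zero_le_one, le_refl 1⟩⟩ : Icc (0:ℝ) 1),
        (⟨1, ⟨zero_le_one, le_refl 1⟩⟩ : Icc (0:ℝ) 1))} := by
    ext p
    simp only [mem_inter_iff, mem_singleton_iff, S8, mem_setOf_eq]
    constructor
    · rintro ⟨_, h1, h2⟩
      exact Prod.ext (Subtype.ext h1) (Subtype.ext h2)
    · rintro rfl
      exact ⟨hone, rfl, rfl⟩
  refine ⟨hRclosed, hSclosed, hLHS, hRHS, ?_⟩
  rw [hLHS, hRHS]
  intro h
  exact absurd (h ▸ mem_singleton _) (notMem_empty _)
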